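/- There is a constant e such that for every finite nonempty set S of binary strings, every x ∈ S, and every natural number k ≤ ⌊log₂|S|⌋, there exists a finite set S' with x ∈ S', |S'| ≤ 2^{⌊log₂|S|⌋ − k}, and C(S') ≤ C(S) + k + e·⌊log₂(C(S) + k + 2)⌋ + e. (Partitioning an x-containing set into 2^k pieces increases its complexity by at most k plus logarithmic terms while dividing its size by 2^k.) -/

import Mathlib

/-- Bijective binary encoding of binary strings as natural numbers. -/
def strToNat : List Bool → ℕ
  | [] => 0
  | b :: t => (if b then 2 else 1) + 2 * strToNat t

/-- The partial result of running machine `M` on program `p` and auxiliary input `d`. -/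
def evalS (M : Nat.Partrec.Code) (p d : List Bool) : Part ℕ :=
  M.eval (Nat.pair (strToNat p) (strToNat d))

/-- `M(p, d) = x`. -/
def outputs (M : Nat.Partrec.Code) (p d x : List Bool) : Prop :=
  strToNat x ∈ evalS M p d

/-- `M` halts on program `p` (with empty auxiliary input). -/
def haltsOn (M : Nat.Partrec.Code) (p : List Bool) : Prop :=
  (evalS M p []).Dom

/-- The number of computation steps taken by `M` on program `p` (with empty auxiliary
input); meaningful only when `M` halts on `p`. -/
noncomputable def halttime (M : Nat.Partrec.Code) (p : List Bool) : ℕ :=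
  sInf {t | (Nat.Partrec.Code.evaln t M (Nat.pair (strToNat p) 0)).isSome}

/-- `M` is a universal machine: it simulates every machine `V` via a prefix `w_V`. -/
def Universal (M : Nat.Partrec.Code) : Prop :=
  ∀ V : Nat.Partrec.Code, ∃ w : List Bool, ∀ p y : List Bool,
    (evalS V p y).Dom → evalS M (w ++ p) y = evalS V p y

/-- Plain Kolmogorov complexity `C(x)` on machine `M`. -/
noncomputable def Cpx (M : Nat.Partrec.Code) (x : List Bool) : ℕ :=
  sInf {n | ∃ p : List Bool, p.length = n ∧ outputs M p [] x}

/-- Sophistication of `x` at (integer) significance level `c`. -/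
noncomputable def soph (M : Nat.Partrec.Code) (c : ℤ) (x : List Bool) : ℕ :=
  sInf {n | ∃ p : List Bool, p.length = n ∧ (∀ d : List Bool, (evalS M p d).Dom) ∧
    ∃ d : List Bool, outputs M p d x ∧ (p.length + d.length : ℤ) ≤ (Cpx M x : ℤ) + c}

/-- Logical depth of `x` at significance level `c`. -/
noncomputable def ld (M : Nat.Partrec.Code) (c : ℕ) (x : List Bool) : ℕ :=
  sInf {t | ∃ p : List Bool, p.length ≤ Cpx M x + c ∧ outputs M p [] x ∧ halttime M p = t}

/-- The inverse Busy Beaver function `bb(n)`. -/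
noncomputable def bbInv (M : Nat.Partrec.Code) (n : ℕ) : ℕ :=
  sInf {k | ∃ p : List Bool, p.length = k ∧ haltsOn M p ∧ n ≤ halttime M p}

/-- Busy Beaver logical depth of `x` at significance `c`. -/
noncomputable def ldbb (M : Nat.Partrec.Code) (c : ℕ) (x : List Bool) : ℕ :=
  bbInv M (ld M c x)

/-- The Busy Beaver function `BB(l)`. -/
noncomputable def BB (M : Nat.Partrec.Code) (l : ℕ) : ℕ :=
  sSup {t | ∃ p : List Bool, p.length ≤ l ∧ haltsOn M p ∧ halttime M p = t}

/-- Canonical encoding of a finite set of binary strings: the code of the sorted list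
of the codes of its elements. -/
def setCode (S : Finset (List Bool)) : ℕ :=
  Encodable.encode ((S.image strToNat).sort (· ≤ ·))

/-- Kolmogorov complexity `C(S)` of a finite set of binary strings on machine `M`. -/
noncomputable def CSet (M : Nat.Partrec.Code) (S : Finset (List Bool)) : ℕ :=
  sInf {n | ∃ p : List Bool, p.length = n ∧ setCode S ∈ evalS M p []}

/-- Conditional Kolmogorov complexity `C(x | m)` where the condition is a natural number. -/
noncomputable def CpxCondN (M : Nat.Partrec.Code) (x : List Bool) (m : ℕ) : ℕ :=
  sInf {n | ∃ p : List Bool, p.length = n ∧ strToNat x ∈ M.eval (Nat.pair (strToNat p) m)}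
/-!
Let `p` be a shortest program for `S`. The sorted list of codes of `S` splits into at most
`2 ^ (k + 1)` consecutive blocks of size `2 ^ (⌊log₂ |S|⌋ - k)`; the block containing `x` is
described by `p`, the block index `i < 2 ^ (k + 1)` written in `k + 1` bits, and a
self-delimiting code of `k` of length `O(log k)`. A fixed machine parses this header, runs `U`
on `p`, and outputs the block, so universality of `U` costs only a constant more.
-/

theorem strToNat_append (h p : List Bool) :
    strToNat (h ++ p) = strToNat h + 2 ^ h.length * strToNat p := by
  induction h with
  | nil => simp [strToNat]
  | cons b h ih => simp only [List.cons_append, strToNat, ih, List.length_cons, pow_succ]; ring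

theorem strToNat_injective : Function.Injective strToNat := by
  intro s t hst
  induction s generalizing t with
  | nil => cases t with
    | nil => rfl
    | cons b t => simp only [strToNat] at hst; split at hst <;> omega
  | cons a s ih => cases t with
    | nil => simp only [strToNat] at hst; split at hst <;> omega
    | cons b t =>
      simp only [strToNat] at hst
      obtain ⟨rfl, htail⟩ : a = b ∧ strToNat s = strToNat t := by
        cases a <;> cases b <;> simp at hst ⊢ <;> omega
      rw [ih htail]

theorem exists_length_eq_strToNat_add_one {ℓ m : ℕ} (hm : m < 2 ^ ℓ) :
    ∃ h : List Bool, h.length = ℓ ∧ strToNat h + 1 = 2 ^ ℓ + m := by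
  induction ℓ generalizing m with
  | zero => exact ⟨[], rfl, by simp_all [strToNat]⟩
  | succ ℓ ih =>
    obtain ⟨h, hlen, hval⟩ := ih (m := m / 2) (by rw [pow_succ] at hm; omega)
    refine ⟨decide (m % 2 = 1) :: h, by simp [hlen], ?_⟩
    simp only [strToNat, decide_eq_true_eq, pow_succ]
    split_ifs <;> omega

theorem Nat.add_two_pow_mul_lt {a b s t : ℕ} (ha : a < 2 ^ s) (hb : b < 2 ^ t) :
    a + 2 ^ s * b < 2 ^ (s + t) :=
  calc a + 2 ^ s * b < 2 ^ s * (b + 1) := by rw [mul_add_one]; omega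
    _ ≤ 2 ^ s * 2 ^ t := Nat.mul_le_mul_left _ hb
    _ = 2 ^ (s + t) := (pow_add 2 s t).symm

theorem Nat.findGreatest_two_pow_dvd_two_pow_mul_odd (j x : ℕ) :
    Nat.findGreatest (2 ^ · ∣ 2 ^ j * (2 * x + 1)) (2 ^ j * (2 * x + 1)) = j := by
  refine Nat.findGreatest_eq_iff.2 ⟨?_, fun _ => dvd_mul_right _ _, fun n hjn _ hdvd => ?_⟩
  · exact (Nat.lt_two_pow_self).le.trans (Nat.le_mul_of_pos_right _ (by omega))
  · have h : 2 ^ j * 2 ∣ 2 ^ j * (2 * x + 1) :=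
      (pow_succ 2 j ▸ Nat.pow_dvd_pow 2 hjn).trans hdvd
    have := (Nat.mul_dvd_mul_iff_left (by positivity)).1 h
    omega

theorem Nat.log_eq_findGreatest {b : ℕ} (hb : 1 < b) (n : ℕ) :
    Nat.log b n = Nat.findGreatest (b ^ · ≤ n) n :=
  (Nat.findGreatest_eq_iff (P := (b ^ · ≤ n)).2 ⟨Nat.log_le_self b n,
    fun h => Nat.pow_log_le_self b fun hn => h (by simp [hn]),
    fun m hm _ => not_le.2 (Nat.lt_pow_of_log_lt (y := n) hb hm)⟩).symm

theorem Primrec.nat_pow : Primrec₂ ((· ^ ·) : ℕ → ℕ → ℕ) :=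
  Primrec₂.unpaired'.mp Nat.Primrec.pow

theorem Primrec.nat_log {b : ℕ} (hb : 1 < b) : Primrec (Nat.log b) :=
  (Primrec.nat_findGreatest Primrec.id
    (Primrec.nat_le.comp₂ (Primrec.nat_pow.comp₂ (Primrec₂.const b) Primrec₂.right)
      Primrec₂.left)).of_eq fun n => (Nat.log_eq_findGreatest hb n).symm

theorem Nat.add_mul_div_mod_of_lt {a b x : ℕ} (h : a < b) :
    (a + b * x) / b = x ∧ (a + b * x) % b = a := by
  rw [Nat.add_mul_div_left _ _ (by omega), Nat.div_eq_of_lt h, Nat.add_mul_mod_self_left,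
    Nat.mod_eq_of_lt h, zero_add]
  exact ⟨rfl, rfl⟩

/-- Least significant bit first: `j` zeros and a one, then `k` in `j` bits, then `i` in
`k + 1` bits, then the binary digits of `c`. Since `strToNat q + 1` is the binary value of `q`
with a leading one appended, a program `p` enters as `c = strToNat p + 1`. -/
def headerCode (k i c : ℕ) : ℕ :=
  let j := Nat.log 2 k + 1
  2 ^ j + 2 ^ (j + 1) * (k + 2 ^ j * (i + 2 ^ (k + 1) * c))

/-- `j` is read off as the number of trailing zeros of `M`. -/
def decodeHeader (M : ℕ) : ℕ × ℕ × ℕ :=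
  let j := Nat.findGreatest (2 ^ · ∣ M) M
  let k := M / 2 ^ (j + 1) % 2 ^ j
  let r := M / 2 ^ (2 * j + 1)
  (k, r % 2 ^ (k + 1), r / 2 ^ (k + 1))

theorem decodeHeader_headerCode {k i : ℕ} (hi : i < 2 ^ (k + 1)) (c : ℕ) :
    decodeHeader (headerCode k i c) = (k, i, c) := by
  set j := Nat.log 2 k + 1
  have hk : k < 2 ^ j := Nat.lt_pow_succ_log_self (by norm_num) k
  set Y := i + 2 ^ (k + 1) * c
  set X := k + 2 ^ j * Y
  have hM : headerCode k i c = 2 ^ j * (2 * X + 1) := by simp only [headerCode]; ring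
  have hX : headerCode k i c / 2 ^ (j + 1) = X :=
    (Nat.add_mul_div_mod_of_lt (Nat.pow_lt_pow_right (by norm_num) (Nat.lt_add_one j))).1
  have hY : X / 2 ^ j = Y := (Nat.add_mul_div_mod_of_lt hk).1
  simp only [decodeHeader]
  rw [hM, Nat.findGreatest_two_pow_dvd_two_pow_mul_odd, ← hM, hX,
    (Nat.add_mul_div_mod_of_lt hk).2, show 2 * j + 1 = (j + 1) + j by ring, pow_add,
    ← Nat.div_div_eq_div_mul, hX, hY, (Nat.add_mul_div_mod_of_lt hi).1,
    (Nat.add_mul_div_mod_of_lt hi).2]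

theorem exists_strToNat_add_one_eq_headerCode {k i : ℕ} (hi : i < 2 ^ (k + 1)) (p : List Bool) :
    ∃ q : List Bool, q.length = p.length + k + 2 * Nat.log 2 k + 4 ∧
      strToNat q + 1 = headerCode k i (strToNat p + 1) := by
  set j := Nat.log 2 k + 1
  have hk : k < 2 ^ j := Nat.lt_pow_succ_log_self (by norm_num) k
  obtain ⟨h, hlen, hval⟩ := exists_length_eq_strToNat_add_one
    (Nat.add_two_pow_mul_lt (Nat.pow_lt_pow_right (by norm_num) (Nat.lt_add_one j))
      (Nat.add_two_pow_mul_lt hk hi))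
  refine ⟨h ++ p, by simp only [List.length_append, hlen]; omega, ?_⟩
  rw [strToNat_append, hlen, add_right_comm, hval]
  simp only [headerCode, j]
  ring

theorem Primrec.decodeHeader : Primrec decodeHeader := by
  have hj : Primrec fun M : ℕ => Nat.findGreatest (2 ^ · ∣ M) M :=
    Primrec.nat_findGreatest Primrec.id
      ((Primrec.eq.comp₂ (Primrec.nat_mod.comp₂ Primrec₂.left
        (Primrec.nat_pow.comp₂ (Primrec₂.const 2) Primrec₂.right)) (Primrec₂.const 0)).of_eq
        fun M t => Nat.dvd_iff_mod_eq_zero.symm)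
  have pow2 {f : ℕ → ℕ} (hf : Primrec f) : Primrec fun M => 2 ^ f M :=
    Primrec.nat_pow.comp (Primrec.const 2) hf
  have hk : Primrec fun M : ℕ => M / 2 ^ (Nat.findGreatest (2 ^ · ∣ M) M + 1) %
      2 ^ Nat.findGreatest (2 ^ · ∣ M) M :=
    Primrec.nat_mod.comp (Primrec.nat_div.comp Primrec.id (pow2 (Primrec.succ.comp hj)))
      (pow2 hj)
  have hr : Primrec fun M : ℕ => M / 2 ^ (2 * Nat.findGreatest (2 ^ · ∣ M) M + 1) :=
    Primrec.nat_div.comp Primrec.id (pow2 (Primrec.nat_double_succ.comp hj))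
  have hK := pow2 (Primrec.succ.comp hk)
  exact hk.pair ((Primrec.nat_mod.comp hr hK).pair (Primrec.nat_div.comp hr hK))

theorem List.getElem_mem_take_drop_div_mul {α : Type*} {l : List α} {m B : ℕ}
    (hm : m < l.length) (hB : 0 < B) : l[m] ∈ (l.drop (m / B * B)).take B := by
  have hle : m / B * B ≤ m := Nat.div_mul_le_self m B
  have hlt : m - m / B * B < B := by
    have := Nat.mod_lt m hB; have := Nat.div_add_mod' m B; omega
  refine List.mem_iff_getElem?.2 ⟨m - m / B * B, ?_⟩
  rw [List.getElem?_take_of_lt hlt, List.getElem?_drop, Nat.add_sub_cancel' hle,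
    List.getElem?_eq_getElem hm]

def chunk (L : List ℕ) (k i : ℕ) : List ℕ :=
  let B := 2 ^ (Nat.log 2 L.length - k)
  (L.drop (i * B)).take B

theorem Primrec.chunk : Primrec fun x : List ℕ × ℕ × ℕ => chunk x.1 x.2.1 x.2.2 := by
  have hB : Primrec fun x : List ℕ × ℕ × ℕ => 2 ^ (Nat.log 2 x.1.length - x.2.1) :=
    Primrec.nat_pow.comp (Primrec.const 2) (Primrec.nat_sub.comp
      ((Primrec.nat_log (by norm_num)).comp (Primrec.list_length.comp Primrec.fst))
      (Primrec.fst.comp Primrec.snd))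
  exact Primrec.list_take.comp hB (Primrec.list_drop.comp
    (Primrec.nat_mul.comp (Primrec.snd.comp Primrec.snd) hB) Primrec.fst)

def sortedCodes (S : Finset (List Bool)) : List ℕ :=
  (S.image strToNat).sort (· ≤ ·)

theorem setCode_eq_encode_sortedCodes (S : Finset (List Bool)) :
    setCode S = Encodable.encode (sortedCodes S) := rfl

theorem length_sortedCodes (S : Finset (List Bool)) : (sortedCodes S).length = S.card := by
  rw [sortedCodes, Finset.length_sort, Finset.card_image_of_injective _ strToNat_injective]

theorem strToNat_mem_sortedCodes {S : Finset (List Bool)} {x : List Bool} :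
    strToNat x ∈ sortedCodes S ↔ x ∈ S := by
  rw [sortedCodes, Finset.mem_sort, strToNat_injective.mem_finset_image]

theorem sortedCodes_filter_of_sublist {S : Finset (List Bool)} {l : List ℕ}
    (hl : l.Sublist (sortedCodes S)) : sortedCodes (S.filter (strToNat · ∈ l)) = l := by
  unfold sortedCodes at hl ⊢
  refine List.Perm.eq_of_pairwise' (Finset.pairwise_sort _ _)
    ((Finset.pairwise_sort _ _).sublist hl) ?_
  refine List.perm_of_nodup_nodup_toFinset_eq (Finset.sort_nodup _ _)
    ((Finset.sort_nodup _ _).sublist hl) ?_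
  ext y
  simp only [List.mem_toFinset, Finset.mem_sort, Finset.mem_image, Finset.mem_filter]
  constructor
  · rintro ⟨s, ⟨-, hs⟩, rfl⟩
    exact hs
  · intro hy
    obtain ⟨s, hs, rfl⟩ := Finset.mem_image.1 ((Finset.mem_sort _).1 (hl.subset hy))
    exact ⟨s, ⟨hs, hy⟩, rfl⟩

def chunkSet (S : Finset (List Bool)) (k i : ℕ) : Finset (List Bool) :=
  S.filter (strToNat · ∈ chunk (sortedCodes S) k i)

theorem sortedCodes_chunkSet (S : Finset (List Bool)) (k i : ℕ) :
    sortedCodes (chunkSet S k i) = chunk (sortedCodes S) k i :=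
  sortedCodes_filter_of_sublist ((List.take_sublist _ _).trans (List.drop_sublist _ _))

theorem card_chunkSet_le (S : Finset (List Bool)) (k i : ℕ) :
    (chunkSet S k i).card ≤ 2 ^ (Nat.log 2 S.card - k) := by
  rw [← length_sortedCodes, sortedCodes_chunkSet, chunk, length_sortedCodes]
  exact List.length_take_le _ _

theorem mem_chunkSet {S : Finset (List Bool)} {x : List Bool} (hx : x ∈ S) (k : ℕ) :
    x ∈ chunkSet S k ((sortedCodes S).idxOf (strToNat x) / 2 ^ (Nat.log 2 S.card - k)) := by
  have hmem := strToNat_mem_sortedCodes.2 hx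
  have hidx := List.idxOf_lt_length_iff.2 hmem
  refine Finset.mem_filter.2 ⟨hx, ?_⟩
  have := List.getElem_mem_take_drop_div_mul hidx (B := 2 ^ (Nat.log 2 S.card - k))
    (by positivity)
  rw [List.getElem_idxOf] at this
  simpa only [chunk, length_sortedCodes] using this

theorem idxOf_sortedCodes_div_lt {S : Finset (List Bool)} {x : List Bool} (hx : x ∈ S) {k : ℕ}
    (hk : k ≤ Nat.log 2 S.card) :
    (sortedCodes S).idxOf (strToNat x) / 2 ^ (Nat.log 2 S.card - k) < 2 ^ (k + 1) := by
  have hidx := List.idxOf_lt_length_iff.2 (strToNat_mem_sortedCodes.2 hx)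
  have hcard : S.card < 2 ^ (k + 1) * 2 ^ (Nat.log 2 S.card - k) := by
    rw [← pow_add, show k + 1 + (Nat.log 2 S.card - k) = Nat.log 2 S.card + 1 by omega]
    exact Nat.lt_pow_succ_log_self (by norm_num) _
  rw [length_sortedCodes] at hidx
  exact (Nat.div_lt_iff_lt_mul (by positivity)).2 (hidx.trans hcard)

def chunkMachine (U : Nat.Partrec.Code) : ℕ →. ℕ := fun n =>
  let h := decodeHeader (n.unpair.1 + 1)
  (U.eval (Nat.pair (h.2.2 - 1) 0)).bind fun c =>
    ((Encodable.decode (α := List ℕ) c).map fun L => Encodable.encode (chunk L h.1 h.2.1) :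
      Option ℕ)

theorem chunkMachine_partrec (U : Nat.Partrec.Code) : Nat.Partrec (chunkMachine U) := by
  rw [← Partrec.nat_iff]
  have hh : Primrec fun n : ℕ => decodeHeader (n.unpair.1 + 1) :=
    Primrec.decodeHeader.comp (Primrec.succ.comp (Primrec.fst.comp Primrec.unpair))
  refine Partrec.bind (Nat.Partrec.Code.eval_part.comp (Computable.const U)
    (Primrec₂.natPair.comp (Primrec.nat_sub.comp (Primrec.snd.comp (Primrec.snd.comp hh))
      (Primrec.const 1)) (Primrec.const 0)).to_comp) (Computable.ofOption ?_)
  have hh' : Primrec fun x : (ℕ × ℕ) × List ℕ => decodeHeader (x.1.1.unpair.1 + 1) :=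
    hh.comp (Primrec.fst.comp Primrec.fst)
  have hchunk : Primrec₂ fun (x : ℕ × ℕ) (L : List ℕ) =>
      Encodable.encode (chunk L (decodeHeader (x.1.unpair.1 + 1)).1
        (decodeHeader (x.1.unpair.1 + 1)).2.1) :=
    Primrec.encode.comp (Primrec.chunk.comp (Primrec.snd.pair ((Primrec.fst.comp hh').pair
      (Primrec.fst.comp (Primrec.snd.comp hh')))))
  exact (Primrec.option_map (Primrec.decode.comp Primrec.snd) hchunk).to_comp

theorem setCode_chunkSet_mem_chunkMachine {U : Nat.Partrec.Code} {S : Finset (List Bool)}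
    {n k i c : ℕ} (hn : decodeHeader (n.unpair.1 + 1) = (k, i, c + 1))
    (hS : setCode S ∈ U.eval (Nat.pair c 0)) : setCode (chunkSet S k i) ∈ chunkMachine U n := by
  simp only [chunkMachine, hn, Nat.add_sub_cancel]
  refine Part.mem_bind hS ?_
  simp [setCode_eq_encode_sortedCodes, sortedCodes_chunkSet]

theorem Universal.exists_prefix {U : Nat.Partrec.Code} (hU : Universal U) {f : ℕ →. ℕ}
    (hf : Nat.Partrec f) : ∃ w : List Bool, ∀ (q : List Bool) (v : ℕ),
      v ∈ f (Nat.pair (strToNat q) 0) → v ∈ evalS U (w ++ q) [] := by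
  obtain ⟨V, rfl⟩ := Nat.Partrec.Code.exists_code.1 hf
  obtain ⟨w, hw⟩ := hU V
  exact ⟨w, fun q v hv => (hw q [] (Part.dom_iff_mem.2 ⟨v, hv⟩)).symm ▸ hv⟩

theorem CSet_le_length {U : Nat.Partrec.Code} {S : Finset (List Bool)} {p : List Bool}
    (h : setCode S ∈ evalS U p []) : CSet U S ≤ p.length :=
  Nat.sInf_le ⟨p, rfl, h⟩

theorem Universal.exists_length_eq_CSet {U : Nat.Partrec.Code} (hU : Universal U)
    (S : Finset (List Bool)) : ∃ p : List Bool, p.length = CSet U S ∧ setCode S ∈ evalS U p [] := by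
  obtain ⟨w, hw⟩ := hU.exists_prefix (f := fun _ => Part.some (setCode S))
    (Partrec.nat_iff.1 (Partrec.const' _))
  exact Nat.sInf_mem (s := {n | ∃ p : List Bool, p.length = n ∧ setCode S ∈ evalS U p []})
    ⟨_, w ++ [], rfl, hw [] _ (Part.mem_some _)⟩

theorem set_partition_tradeoff :
    ∀ U : Nat.Partrec.Code, Universal U →
    ∃ e : ℕ, ∀ S : Finset (List Bool), S.Nonempty → ∀ x ∈ S,
      ∀ k : ℕ, k ≤ Nat.log 2 S.card →
      ∃ S' : Finset (List Bool), x ∈ S' ∧ S'.card ≤ 2 ^ (Nat.log 2 S.card - k) ∧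
        CSet U S' ≤ CSet U S + k + e * Nat.log 2 (CSet U S + k + 2) + e := by
  intro U hU
  obtain ⟨w, hw⟩ := hU.exists_prefix (chunkMachine_partrec U)
  refine ⟨w.length + 4, fun S _ x hx k hk => ?_⟩
  have hi := idxOf_sortedCodes_div_lt hx hk
  obtain ⟨p, hp_len, hp⟩ := hU.exists_length_eq_CSet S
  obtain ⟨q, hq_len, hq⟩ := exists_strToNat_add_one_eq_headerCode hi p
  have hrun := hw q _ (setCode_chunkSet_mem_chunkMachine
    (by rw [Nat.unpair_pair, hq, decodeHeader_headerCode hi]) hp)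
  refine ⟨_, mem_chunkSet hx k, card_chunkSet_le S k _, ?_⟩
  have hlog : Nat.log 2 k ≤ Nat.log 2 (CSet U S + k + 2) := Nat.log_mono_right (by omega)
  calc _ ≤ (w ++ q).length := CSet_le_length hrun
    _ = w.length + CSet U S + k + 2 * Nat.log 2 k + 4 := by
      rw [List.length_append, hq_len, hp_len]; ring
    _ ≤ _ := by nlinarith
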